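/- Let x₀, ..., x_{m+1} be m+2 points in ℝⁿ belonging to a set Σ, let T = conv(x₀, ..., x_{m+1}) and d = diam{x₀, ..., x_{m+1}}. Then there is a constant C = C(m,n) such that H^{m+1}(T) ≤ C · β_Σ^m(x₀, d) · d^{m+1}, where β_Σ^m is the Jones beta number of Σ. Consequently the discrete curvature satisfies K(x₀,...,x_{m+1}) ≤ C β_Σ^m(x₀, d)/d. -/

import Mathlib

open MeasureTheory Set Real ENNReal

/-- The Jones beta number `β_E^m(x, r)`: the infimum over `m`-dimensional linear
subspaces `H ⊆ ℝⁿ` of `sup_{y ∈ E ∩ B(x,r)} dist(y, x + H)/r`. -/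
noncomputable def jonesBeta (m : ℕ) {n : ℕ} (E : Set (EuclideanSpace ℝ (Fin n)))
    (x : EuclideanSpace ℝ (Fin n)) (r : ℝ) : ℝ :=
  ⨅ H : {H : Submodule ℝ (EuclideanSpace ℝ (Fin n)) // Module.finrank ℝ H = m},
    ⨆ y : ↥(E ∩ Metric.closedBall x r),
      Metric.infDist (y : EuclideanSpace ℝ (Fin n))
        ((fun v => x + v) '' (H.1 : Set (EuclideanSpace ℝ (Fin n)))) / r

/-- The discrete curvature `K(x₀,…,x_{m+1}) = H^{m+1}(conv{x₀,…,x_{m+1}})/diam^{m+2}`. -/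
noncomputable def discreteCurv {n : ℕ} (m : ℕ) (x : Fin (m + 2) → EuclideanSpace ℝ (Fin n)) : ℝ :=
  (μH[(m + 1 : ℝ)] (convexHull ℝ (Set.range x))).toReal / Metric.diam (Set.range x) ^ (m + 2)

/-! The vertices span an affine plane of dimension at most `m + 1`; if it is smaller,
`H^{m+1}(T) = 0`. Otherwise, for every `b > β = β_Σ^m(x₀, d)` all vertices, hence by convexity
all of `T`, lie within `δ = b d` of an `m`-plane through `x₀`. Inside the `(m+1)`-plane, the
`δ`-neighbourhood of an `m`-plane cut off by a ball of radius `d` is covered by `O((d/δ)^m)`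
balls of radius `O(δ)` (round coordinates on the `m`-plane to a grid of mesh `δ`), each of
`H^{m+1}`-measure `O(δ^{m+1})`, so `H^{m+1}(T) = O(b d^{m+1})`; then let `b ↓ β`. -/

open Metric NNReal Topology

-- `(12 d/δ)^m` balls of radius `(1 + √m) δ`, each of measure `≤ (4 √(m+1) (1 + √m) δ)^(m+1)`.
noncomputable def slabConst (m : ℕ) : ℝ :=
  12 ^ m * (4 * √((m + 1 : ℕ) : ℝ) * (1 + √m)) ^ (m + 1)

lemma slabConst_pos (m : ℕ) : 0 < slabConst m := by
  unfold slabConst; positivity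

lemma abs_round_le_of_abs_le {x : ℝ} {N : ℕ} (h : |x| ≤ N) : |round x| ≤ N := by
  have hmono : Monotone (round : ℝ → ℤ) := fun a b hab => by
    simpa only [round_eq] using Int.floor_mono (by linarith : a + 1 / 2 ≤ b + 1 / 2)
  rw [abs_le] at h ⊢
  constructor
  · have := hmono h.1
    rwa [show -(N : ℝ) = ((-(N : ℤ) : ℤ) : ℝ) by push_cast; ring, round_intCast] at this
  · simpa using hmono h.2

lemma exists_finset_closedBall_subset_biUnion (m : ℕ) {R δ : ℝ} (hR : 0 ≤ R) (hδ : 0 < δ) :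
    ∃ F : Finset (EuclideanSpace ℝ (Fin m)), (F.card : ℝ) ≤ (2 * R / δ + 3) ^ m ∧
      closedBall 0 R ⊆ ⋃ c ∈ F, closedBall c (√m * δ / 2) := by
  set N := ⌈R / δ⌉₊
  set G := Fintype.piFinset fun _ : Fin m => Finset.Icc (-(N : ℤ)) N
  refine ⟨G.image fun j => WithLp.toLp 2 fun i => δ * j i, ?_, ?_⟩
  · have hG : (G.card : ℝ) = (2 * N + 1) ^ m := by
      simp only [G, Fintype.card_piFinset, Int.card_Icc, Finset.prod_const, Finset.card_univ,
        Fintype.card_fin, Nat.cast_pow]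
      rw [show (N + 1 - -N : ℤ) = ((2 * N + 1 : ℕ) : ℤ) by push_cast; ring, Int.toNat_natCast]
      push_cast; rfl
    have hN : (N : ℝ) < R / δ + 1 := Nat.ceil_lt_add_one (by positivity)
    calc ((G.image _).card : ℝ) ≤ G.card := by exact_mod_cast Finset.card_image_le
      _ = (2 * N + 1) ^ m := hG
      _ ≤ (2 * R / δ + 3) ^ m := by
          refine pow_le_pow_left₀ (by positivity) ?_ m
          rw [mul_div_assoc]; linarith
  · intro p hp
    set j : Fin m → ℤ := fun i => round (p i / δ)
    have hround : ∀ i, |p i - δ * j i| ≤ δ / 2 := fun i => by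
      have : p i - δ * j i = δ * (p i / δ - j i) := by field_simp
      rw [this, abs_mul, abs_of_pos hδ]
      nlinarith [abs_sub_round (p i / δ)]
    have hj : j ∈ G := by
      refine Fintype.mem_piFinset.2 fun i => Finset.mem_Icc.2 (abs_le.1 (abs_round_le_of_abs_le ?_))
      calc |p i / δ| = |p i| / δ := by rw [abs_div, abs_of_pos hδ]
        _ ≤ R / δ := by
          gcongr
          simpa using (PiLp.norm_apply_le p i).trans (mem_closedBall_zero_iff.1 hp)
        _ ≤ N := Nat.le_ceil _
    refine mem_biUnion (Finset.mem_coe.2 (Finset.mem_image_of_mem _ hj)) ?_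
    rw [mem_closedBall, EuclideanSpace.dist_eq]
    calc √(∑ i, dist (p i) (δ * j i) ^ 2) ≤ √(∑ _i : Fin m, (δ / 2) ^ 2) := by
          gcongr with i
          rw [Real.dist_eq]
          exact hround i
      _ = √m * δ / 2 := by
          rw [Finset.sum_const, Finset.card_univ, Fintype.card_fin, nsmul_eq_mul,
            Real.sqrt_mul (by positivity), Real.sqrt_sq (by positivity)]
          ring

lemma EuclideanSpace.hausdorffMeasure_le_of_subset_closedBall {k : ℕ}
    {s : Set (EuclideanSpace ℝ (Fin k))} {v : EuclideanSpace ℝ (Fin k)} {r : ℝ} (hr : 0 ≤ r)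
    (hs : s ⊆ closedBall v r) :
    μH[k] s ≤ ENNReal.ofReal ((2 * √k * r) ^ k) := by
  -- On `Fin k → ℝ` with the sup metric `μH[k]` is Lebesgue measure, and the identity map to
  -- `EuclideanSpace` is `√k`-Lipschitz.
  have hsub : WithLp.ofLp '' s ⊆ closedBall (WithLp.ofLp v) r := by
    rintro _ ⟨y, hy, rfl⟩
    exact (PiLp.lipschitzWith_ofLp 2 _).dist_le_mul y v |>.trans (by simpa using hs hy)
  have hs_eq : s = WithLp.toLp 2 '' (WithLp.ofLp '' s) := by
    rw [image_image]; simp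
  calc μH[k] s ≤ _ * μH[k] (WithLp.ofLp '' s) := by
        conv_lhs => rw [hs_eq]
        exact (PiLp.lipschitzWith_toLp 2 _).hausdorffMeasure_image_le (by positivity) _
    _ ≤ ENNReal.ofReal (√k ^ k) * ENNReal.ofReal ((2 * r) ^ k) := by
        gcongr
        · rw [ENNReal.rpow_natCast, ENNReal.ofReal_pow (by positivity), Fintype.card_fin,
            one_div, ENNReal.toReal_inv, ENNReal.toReal_ofNat, ← one_div, ← NNReal.sqrt_eq_rpow,
            ← ENNReal.ofReal_coe_nnreal, Real.coe_sqrt, NNReal.coe_natCast]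
        · calc μH[k] (WithLp.ofLp '' s)
              ≤ μH[(Fintype.card (Fin k) : ℝ)] (closedBall (WithLp.ofLp v) r) := by
                simpa using measure_mono hsub
            _ = _ := by
                rw [hausdorffMeasure_pi_real, Real.volume_pi_closedBall _ hr, Fintype.card_fin]
    _ = ENNReal.ofReal ((2 * √k * r) ^ k) := by
        rw [← ENNReal.ofReal_mul (by positivity)]; ring_nf

section MetricSpace

variable {E : Type*} [MetricSpace E] [MeasurableSpace E] [BorelSpace E]

lemma Isometry.hausdorffMeasure_le_of_subset_closedBall {k : ℕ}
    {f : EuclideanSpace ℝ (Fin k) → E} (hf : Isometry f) {A : Set E} (hAf : A ⊆ range f)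
    {c : E} {ρ : ℝ} (hρ : 0 ≤ ρ) (hAc : A ⊆ closedBall c ρ) :
    μH[k] A ≤ ENNReal.ofReal ((4 * √k * ρ) ^ k) := by
  rw [← image_preimage_eq_of_subset hAf, hf.hausdorffMeasure_image (Or.inl (by positivity))]
  rcases (f ⁻¹' A).eq_empty_or_nonempty with hA | ⟨v, hv⟩
  · simp [hA]
  have hsub : f ⁻¹' A ⊆ closedBall v (2 * ρ) := fun w hw => by
    rw [mem_closedBall, ← hf.dist_eq]
    linarith [dist_triangle_right (f w) (f v) c, mem_closedBall.1 (hAc hw),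
      mem_closedBall.1 (hAc hv)]
  calc μH[k] (f ⁻¹' A) ≤ ENNReal.ofReal ((2 * √k * (2 * ρ)) ^ k) :=
        EuclideanSpace.hausdorffMeasure_le_of_subset_closedBall (by positivity) hsub
    _ = ENNReal.ofReal ((4 * √k * ρ) ^ k) := by ring_nf

lemma Isometry.hausdorffMeasure_le_of_subset_biUnion_closedBall {k : ℕ}
    {f : EuclideanSpace ℝ (Fin k) → E} (hf : Isometry f) {A : Set E} (hAf : A ⊆ range f)
    {F : Finset E} {ρ : ℝ} (hρ : 0 ≤ ρ) (hAF : A ⊆ ⋃ c ∈ F, closedBall c ρ) :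
    μH[k] A ≤ F.card * ENNReal.ofReal ((4 * √k * ρ) ^ k) := by
  calc μH[k] A ≤ μH[k] (⋃ c ∈ F, A ∩ closedBall c ρ) := by
        refine measure_mono fun y hy => ?_
        obtain ⟨c, hc, hyc⟩ := mem_iUnion₂.1 (hAF hy)
        exact mem_iUnion₂.2 ⟨c, hc, hy, hyc⟩
    _ ≤ ∑ c ∈ F, μH[k] (A ∩ closedBall c ρ) := measure_biUnion_finset_le F _
    _ ≤ ∑ _c ∈ F, ENNReal.ofReal ((4 * √k * ρ) ^ k) := Finset.sum_le_sum fun c _ =>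
        hf.hausdorffMeasure_le_of_subset_closedBall (inter_subset_left.trans hAf) hρ
          inter_subset_right
    _ = F.card * ENNReal.ofReal ((4 * √k * ρ) ^ k) := by rw [Finset.sum_const, nsmul_eq_mul]

lemma Isometry.hausdorffMeasure_eq_zero_of_subset_range {j k : ℕ}
    {g : EuclideanSpace ℝ (Fin j) → E} (hg : Isometry g) (hjk : j < k) {s : Set E}
    (hs : s ⊆ range g) : μH[k] s = 0 := by
  have hdim : dimH s < (k : ℝ≥0) := calc
    dimH s ≤ dimH (univ : Set (EuclideanSpace ℝ (Fin j))) :=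
      (dimH_mono hs).trans hg.lipschitz.dimH_range_le
    _ = j := by rw [Real.dimH_univ_eq_finrank, finrank_euclideanSpace_fin]
    _ < (k : ℝ≥0) := by exact_mod_cast hjk
  simpa using hausdorffMeasure_of_dimH_lt hdim

end MetricSpace

section ProperSpace

variable {E : Type*} [MetricSpace E] [ProperSpace E]

lemma Isometry.exists_finset_cthickening_range_inter_closedBall_subset_biUnion {m : ℕ}
    {g : EuclideanSpace ℝ (Fin m) → E} (hg : Isometry g) {R δ : ℝ} (hR : 0 ≤ R)
    (hδ : 0 < δ) :
    ∃ F : Finset E, (F.card : ℝ) ≤ (2 * R / δ + 5) ^ m ∧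
      cthickening δ (range g) ∩ closedBall (g 0) R ⊆
        ⋃ c ∈ F, closedBall c ((1 + √m) * δ) := by
  classical
  obtain ⟨G, hGcard, hGcover⟩ :=
    exists_finset_closedBall_subset_biUnion m (by positivity : 0 ≤ R + δ) hδ
  refine ⟨G.image g, ?_, ?_⟩
  · calc ((G.image g).card : ℝ) ≤ G.card := by exact_mod_cast Finset.card_image_le
      _ ≤ (2 * (R + δ) / δ + 3) ^ m := hGcard
      _ = (2 * R / δ + 5) ^ m := by congr 1; field_simp; ring
  rintro y ⟨hyg, hyR⟩
  obtain ⟨_, ⟨w, rfl⟩, hyw⟩ :=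
    hg.isClosedEmbedding.isClosed_range.exists_infDist_eq_dist (range_nonempty g) y
  have hyw : dist y (g w) ≤ δ :=
    hyw ▸ ENNReal.toReal_le_of_le_ofReal hδ.le (mem_cthickening_iff.1 hyg)
  have hw : w ∈ closedBall 0 (R + δ) := by
    rw [mem_closedBall, ← hg.dist_eq]
    linarith [dist_triangle_left (g w) (g 0) y, mem_closedBall.1 hyR]
  obtain ⟨c, hc, hwc⟩ := mem_iUnion₂.1 (hGcover hw)
  refine mem_biUnion (Finset.mem_coe.2 (Finset.mem_image_of_mem g hc)) ?_
  rw [mem_closedBall]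
  calc dist y (g c) ≤ dist y (g w) + dist w c := hg.dist_eq w c ▸ dist_triangle _ _ _
    _ ≤ δ + √m * δ / 2 := add_le_add hyw hwc
    _ ≤ (1 + √m) * δ := by nlinarith [Real.sqrt_nonneg m]

variable [MeasurableSpace E] [BorelSpace E]

lemma Isometry.hausdorffMeasure_le_of_subset_cthickening_range {m : ℕ}
    {f : EuclideanSpace ℝ (Fin (m + 1)) → E} (hf : Isometry f)
    {g : EuclideanSpace ℝ (Fin m) → E} (hg : Isometry g) {T : Set E} {d δ : ℝ}
    (hd : 0 < d) (hδ : 0 < δ) (hTf : T ⊆ range f) (hTd : T ⊆ closedBall (g 0) d)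
    (hTδ : T ⊆ cthickening δ (range g)) :
    μH[(m + 1 : ℕ)] T ≤
      ENNReal.ofReal (slabConst m * δ * d ^ m) := by
  -- A neighbourhood wider than `2 d` adds no constraint, since `T ⊆ closedBall (g 0) d`.
  wlog hδd : δ ≤ 2 * d generalizing δ
  · have hT2d : T ⊆ cthickening (2 * d) (range g) := fun y hy =>
      mem_cthickening_of_dist_le y (g 0) _ _ (mem_range_self 0)
        (by linarith [mem_closedBall.1 (hTd hy)])
    refine (this (by positivity) hT2d le_rfl).trans (ENNReal.ofReal_le_ofReal ?_)
    have := slabConst_pos m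
    gcongr
    linarith
  obtain ⟨F, hFcard, hF⟩ :=
    hg.exists_finset_cthickening_range_inter_closedBall_subset_biUnion hd.le hδ
  have hcard : (F.card : ℝ) ≤ (12 * d / δ) ^ m := by
    refine hFcard.trans (pow_le_pow_left₀ (by positivity) ?_ m)
    rw [div_add' _ _ _ hδ.ne', div_le_div_iff_of_pos_right hδ]
    linarith
  calc μH[(m + 1 : ℕ)] T
      ≤ F.card * ENNReal.ofReal ((4 * √((m + 1 : ℕ) : ℝ) * ((1 + √m) * δ)) ^ (m + 1)) :=
        hf.hausdorffMeasure_le_of_subset_biUnion_closedBall hTf (by positivity)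
          fun y hy => hF ⟨hTδ hy, hTd hy⟩
    _ = ENNReal.ofReal (F.card * (4 * √((m + 1 : ℕ) : ℝ) * ((1 + √m) * δ)) ^ (m + 1)) := by
        rw [← ENNReal.ofReal_natCast, ← ENNReal.ofReal_mul (Nat.cast_nonneg _)]
    _ ≤ ENNReal.ofReal
          ((12 * d / δ) ^ m * (4 * √((m + 1 : ℕ) : ℝ) * ((1 + √m) * δ)) ^ (m + 1)) := by
        gcongr
    _ = ENNReal.ofReal (slabConst m * δ * d ^ m) := by
        congr 1
        unfold slabConst
        rw [div_pow, mul_pow, ← mul_assoc _ _ δ, mul_pow _ δ, pow_succ δ]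
        field_simp

end ProperSpace

lemma Submodule.exists_isometry_range_eq_vadd {E : Type*} [NormedAddCommGroup E]
    [InnerProductSpace ℝ E] {V : Submodule ℝ E} [FiniteDimensional ℝ V] {k : ℕ}
    (hV : Module.finrank ℝ V = k) (x₀ : E) :
    ∃ g : EuclideanSpace ℝ (Fin k) → E, Isometry g ∧ g 0 = x₀ ∧
      range g = (x₀ + ·) '' (V : Set E) := by
  let e := ((stdOrthonormalBasis ℝ V).reindex (finCongr hV)).repr.symm
  refine ⟨fun w => x₀ + (e w : E), ?_, by simp, ?_⟩
  · exact Isometry.of_dist_eq fun a b => by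
      rw [dist_add_left]; exact e.isometry.dist_eq a b
  · ext y
    constructor
    · rintro ⟨w, rfl⟩; exact ⟨e w, (e w).2, rfl⟩
    · rintro ⟨v, hv, rfl⟩; exact ⟨e.symm ⟨v, hv⟩, by simp⟩

lemma exists_submodule_finrank_eq {m n : ℕ} (h : m ≤ n) :
    ∃ H : Submodule ℝ (EuclideanSpace ℝ (Fin n)), Module.finrank ℝ H = m := by
  have hli : LinearIndependent ℝ
      fun i : Fin m => EuclideanSpace.basisFun (Fin n) ℝ (Fin.castLE h i) :=
    (EuclideanSpace.basisFun (Fin n) ℝ).orthonormal.linearIndependent.comp _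
      (Fin.castLE_injective h)
  exact ⟨Submodule.span ℝ (range _), by rw [finrank_span_eq_card hli, Fintype.card_fin]⟩

section JonesBeta

variable {m n : ℕ} {S : Set (EuclideanSpace ℝ (Fin n))} {x : EuclideanSpace ℝ (Fin n)}
  {r : ℝ}

lemma jonesBeta_nonneg (hr : 0 ≤ r) : 0 ≤ jonesBeta m S x r :=
  Real.iInf_nonneg fun _ => Real.iSup_nonneg fun _ => div_nonneg infDist_nonneg hr

lemma exists_submodule_subset_cthickening_of_jonesBeta_lt (hmn : m ≤ n) (hr : 0 < r) {b : ℝ}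
    (hb : jonesBeta m S x r < b) :
    ∃ H : Submodule ℝ (EuclideanSpace ℝ (Fin n)), Module.finrank ℝ H = m ∧
      S ∩ closedBall x r ⊆
        cthickening (b * r) ((x + ·) '' (H : Set (EuclideanSpace ℝ (Fin n)))) := by
  have : Nonempty {H : Submodule ℝ (EuclideanSpace ℝ (Fin n)) // Module.finrank ℝ H = m} :=
    (exists_submodule_finrank_eq hmn).elim fun H hH => ⟨⟨H, hH⟩⟩
  obtain ⟨⟨H, hH⟩, hlt⟩ := exists_lt_of_ciInf_lt hb
  refine ⟨H, hH, fun y hy => ?_⟩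
  set P := (x + ·) '' (H : Set (EuclideanSpace ℝ (Fin n)))
  have hxP : x ∈ P := ⟨0, H.zero_mem, add_zero x⟩
  have hbdd : BddAbove
      (range fun y : ↥(S ∩ closedBall x r) => infDist (y : EuclideanSpace ℝ (Fin n)) P / r) :=
    ⟨1, forall_mem_range.2 fun y =>
      (div_le_one hr).2 ((infDist_le_dist_of_mem hxP).trans y.2.2)⟩
  have hy : infDist y P < b * r := by
    rw [← div_lt_iff₀ hr]
    exact (le_ciSup hbdd ⟨y, hy⟩).trans_lt hlt
  obtain ⟨p, hp, hyp⟩ := (infDist_lt_iff ⟨x, hxP⟩).1 hy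
  exact mem_cthickening_of_dist_le y p _ _ hp hyp.le

end JonesBeta

lemma convexHull_subset_vadd_vectorSpan {E : Type*} [AddCommGroup E] [Module ℝ E] {s : Set E}
    {p : E} (hp : p ∈ s) : convexHull ℝ s ⊆ (p + ·) '' (vectorSpan ℝ s : Set E) :=
  fun y hy => ⟨y - p, direction_affineSpan ℝ s ▸
    AffineSubspace.vsub_mem_direction (convexHull_subset_affineSpan s hy) (mem_affineSpan ℝ hp),
    add_sub_cancel p y⟩

section Simplex

variable {m n : ℕ} {S : Set (EuclideanSpace ℝ (Fin n))}
  {x : Fin (m + 2) → EuclideanSpace ℝ (Fin n)}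

lemma hausdorffMeasure_convexHull_le_of_jonesBeta_lt (hx : ∀ i, x i ∈ S)
    (hV : Module.finrank ℝ (vectorSpan ℝ (range x)) = m + 1) {b : ℝ}
    (hb : jonesBeta m S (x 0) (diam (range x)) < b) :
    μH[(m + 1 : ℕ)] (convexHull ℝ (range x)) ≤ ENNReal.ofReal
      (slabConst m * b * diam (range x) ^ (m + 1)) := by
  set d := diam (range x)
  have hmn : m ≤ n := by
    have := (Submodule.finrank_le (vectorSpan ℝ (range x))).trans_eq finrank_euclideanSpace_fin
    omega
  have hd : 0 < d := by
    refine diam_pos ?_ (finite_range x).isBounded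
    by_contra h
    rw [not_nontrivial_iff, ← vectorSpan_eq_bot_iff_subsingleton (k := ℝ)] at h
    rw [h, finrank_bot] at hV
    omega
  have hb0 : 0 < b := (jonesBeta_nonneg hd.le).trans_lt hb
  obtain ⟨H, hH, hSH⟩ := exists_submodule_subset_cthickening_of_jonesBeta_lt hmn hd hb
  obtain ⟨f, hf, -, hfV⟩ := (vectorSpan ℝ (range x)).exists_isometry_range_eq_vadd hV (x 0)
  obtain ⟨g, hg, hg0, hgH⟩ := H.exists_isometry_range_eq_vadd hH (x 0)
  have hxd : ∀ i, x i ∈ closedBall (x 0) d := fun i =>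
    dist_le_diam_of_mem (finite_range x).isBounded (mem_range_self i) (mem_range_self 0)
  have hTd : convexHull ℝ (range x) ⊆ closedBall (g 0) d :=
    hg0 ▸ convexHull_min (range_subset_iff.2 hxd) (convex_closedBall _ _)
  have hTH : convexHull ℝ (range x) ⊆ cthickening (b * d) (range g) :=
    hgH ▸ convexHull_min (range_subset_iff.2 fun i => hSH ⟨hx i, hxd i⟩)
      ((H.convex.translate _).cthickening _)
  calc μH[(m + 1 : ℕ)] (convexHull ℝ (range x))
      ≤ ENNReal.ofReal (slabConst m * (b * d) * d ^ m) :=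
        hf.hausdorffMeasure_le_of_subset_cthickening_range hg hd (by positivity)
          (hfV ▸ convexHull_subset_vadd_vectorSpan (mem_range_self 0)) hTd hTH
    _ = _ := by ring_nf

lemma hausdorffMeasure_convexHull_le_jonesBeta (hx : ∀ i, x i ∈ S) :
    μH[(m + 1 : ℝ)] (convexHull ℝ (range x)) ≤ ENNReal.ofReal
      (slabConst m * jonesBeta m S (x 0) (diam (range x)) * diam (range x) ^ (m + 1)) := by
  rw [show (m + 1 : ℝ) = (m + 1 : ℕ) by push_cast; rfl]
  obtain ⟨f, hf, -, hfV⟩ := (vectorSpan ℝ (range x)).exists_isometry_range_eq_vadd rfl (x 0)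
  rcases (finrank_vectorSpan_range_le ℝ x (Fintype.card_fin _)).lt_or_eq with hlt | hV
  · rw [hf.hausdorffMeasure_eq_zero_of_subset_range hlt
      (hfV ▸ convexHull_subset_vadd_vectorSpan (mem_range_self 0))]
    exact zero_le
  -- The infimum defining `β` need not be attained, so approach it from above.
  set β := jonesBeta m S (x 0) (diam (range x))
  refine ge_of_tendsto (x := 𝓝[>] β) ?_ (eventually_nhdsWithin_of_forall fun b hb =>
    hausdorffMeasure_convexHull_le_of_jonesBeta_lt hx hV (mem_Ioi.1 hb))
  exact (ENNReal.continuous_ofReal.tendsto _).comp <|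
    ((continuous_const.mul continuous_id).mul continuous_const).tendsto _
      |>.mono_left nhdsWithin_le_nhds

lemma discreteCurv_le_of_hausdorffMeasure_le {a : ℝ} (ha : 0 ≤ a)
    (h : μH[(m + 1 : ℝ)] (convexHull ℝ (range x)) ≤
      ENNReal.ofReal (a * diam (range x) ^ (m + 1))) :
    discreteCurv m x ≤ a / diam (range x) := by
  unfold discreteCurv
  rcases (diam_nonneg (s := range x)).eq_or_lt with hd | hd
  · simp [← hd]
  calc (μH[(m + 1 : ℝ)] (convexHull ℝ (range x))).toReal / diam (range x) ^ (m + 2)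
      ≤ a * diam (range x) ^ (m + 1) / diam (range x) ^ (m + 2) := by
        gcongr
        exact ENNReal.toReal_le_of_le_ofReal (by positivity) h
    _ = a / diam (range x) := by
        rw [pow_succ _ (m + 1), ← div_div, mul_div_assoc, div_self (by positivity), mul_one]

end Simplex

/-- For `m+2` points `x₀,…,x_{m+1}` of a set `Σ ⊆ ℝⁿ`, with
`T = conv(x₀,…,x_{m+1})` and `d = diam{x₀,…,x_{m+1}}`, there is `C = C(m,n)` with
`H^{m+1}(T) ≤ C β_Σ^m(x₀,d) d^{m+1}`, hence `K(x₀,…,x_{m+1}) ≤ C β_Σ^m(x₀,d)/d`. -/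
theorem simplex_measure_le_beta (m n : ℕ) :
    ∃ C : ℝ, 0 < C ∧
      ∀ (S : Set (EuclideanSpace ℝ (Fin n))) (x : Fin (m + 2) → EuclideanSpace ℝ (Fin n)),
        (∀ i, x i ∈ S) →
        μH[(m + 1 : ℝ)] (convexHull ℝ (Set.range x))
            ≤ ENNReal.ofReal (C * jonesBeta m S (x 0) (Metric.diam (Set.range x))
                * Metric.diam (Set.range x) ^ (m + 1))
          ∧ discreteCurv m x
            ≤ C * jonesBeta m S (x 0) (Metric.diam (Set.range x))
                / Metric.diam (Set.range x) := by
  refine ⟨slabConst m, slabConst_pos m, fun S x hx => ?_⟩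
  have h := hausdorffMeasure_convexHull_le_jonesBeta hx
  exact ⟨h, discreteCurv_le_of_hausdorffMeasure_le
    (mul_nonneg (slabConst_pos m).le (jonesBeta_nonneg diam_nonneg)) h⟩
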